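/- arXiv:2510.07819 — 6 statements merged into one kernel-verified Lean document; each statement's English description precedes it below -/
import Mathlib

section
/- Let A be an n×n real symmetric matrix with nonnegative entries. Then A has at most one positive eigenvalue if and only if for every nonempty subset S of {1,...,n}, the principal minor det(A[S]) satisfies (-1)^{|S|-1} det(A[S]) ≥ 0. -/
/-!
Expanding `det (X • 1 - A)` along principal minors, the hypothesis on the minors says exactly that
every coefficient of the characteristic polynomial below the leading one is nonpositive, so its
coefficient sequence has at most one sign change and Descartes' rule of signs allows at most one
positive eigenvalue.

Conversely, a principal submatrix is a congruence `B = Pᵀ A P`, and (the easy half of Sylvester's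
law of inertia) `B` has at most as many positive eigenvalues as `A`: on the span of the eigenvectors
of `B` with positive eigenvalues the quadratic form of `A` is positive definite, so this span meets
the span of the eigenvectors of `A` with nonpositive eigenvalues only in `0`. Hence at most one
eigenvalue of `B` is positive, its largest eigenvalue is nonnegative since `tr B ≥ 0`, and
`(-1)^(|S|-1) det B` is that eigenvalue times the product of the negated other ones.
-/

open Matrix Polynomial

theorem List.length_destutter_ne_le_one {α : Type*} [DecidableEq α] {l : List α} {a : α}
    (hl : ∀ x ∈ l, x = a) : (l.destutter (· ≠ ·)).length ≤ 1 := by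
  have hsub := List.destutter_sublist (· ≠ ·) l
  have hchain := List.isChain_destutter (· ≠ ·) l
  match h : l.destutter (· ≠ ·) with
  | [] | [_] => simp
  | x :: y :: _ =>
    rw [h] at hsub hchain
    exact absurd ((hl x (hsub.subset (by simp))).trans (hl y (hsub.subset (by simp))).symm)
      (List.isChain_cons_cons.mp hchain).1

namespace Polynomial

variable {R : Type*} [Semiring R] [LinearOrder R]

theorem signVariations_eq_zero_of_coeff_nonpos {P : R[X]} (hP : ∀ i, P.coeff i ≤ 0) :
    signVariations P = 0 := by
  suffices h : ∀ s ∈ (P.coeffList.map SignType.sign).filter (· ≠ 0), s = -1 by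
    have := List.length_destutter_ne_le_one h
    simp only [signVariations]
    omega
  intro s hs
  simp only [List.mem_filter, List.mem_map, coeffList, List.mem_reverse, List.mem_range] at hs
  obtain ⟨⟨_, ⟨i, _, rfl⟩, rfl⟩, hs⟩ := hs
  rcases (hP i).lt_or_eq with h | h
  · simp [h]
  · simp [h] at hs

theorem signVariations_le_one_of_coeff_nonpos {P : R[X]}
    (hP : ∀ i < P.natDegree, P.coeff i ≤ 0) : signVariations P ≤ 1 := by
  have hlead : signVariations P.eraseLead = 0 := by
    refine signVariations_eq_zero_of_coeff_nonpos fun i => ?_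
    rw [eraseLead_coeff]
    split_ifs with h
    · rfl
    · rcases Nat.lt_or_gt_of_ne h with hi | hi
      · exact hP i hi
      · simp [coeff_eq_zero_of_natDegree_lt hi]
  simpa [hlead] using signVariations_le_eraseLead_succ P

end Polynomial

theorem zero_le_neg_one_pow_mul_prod_of_card_pos_le_one {ι R : Type*} [Fintype ι] [Nonempty ι]
    [CommRing R] [LinearOrder R] [IsStrictOrderedRing R] (μ : ι → R)
    (hpos : (Finset.univ.filter fun i => 0 < μ i).card ≤ 1) (hsum : 0 ≤ ∑ i, μ i) :
    0 ≤ (-1) ^ (Fintype.card ι - 1) * ∏ i, μ i := by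
  classical
  obtain ⟨i₀, hi₀⟩ := Finite.exists_max μ
  have hmax : 0 ≤ μ i₀ := by
    by_contra! hneg
    exact hsum.not_gt (Finset.sum_neg (fun i _ => (hi₀ i).trans_lt hneg) Finset.univ_nonempty)
  have hrest : ∀ j ≠ i₀, μ j ≤ 0 := fun j hj => by
    by_contra! hj0
    exact hj (Finset.card_le_one.mp hpos j (by simpa using hj0) i₀
      (by simpa using hj0.trans_le (hi₀ j)))
  rw [← Finset.mul_prod_erase _ _ (Finset.mem_univ i₀), Fintype.card,
    ← Finset.card_erase_of_mem (Finset.mem_univ i₀), ← Finset.prod_const, mul_left_comm,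
    ← Finset.prod_mul_distrib]
  exact mul_nonneg hmax (Finset.prod_nonneg fun j hj => by
    simpa using hrest j (Finset.ne_of_mem_erase hj))

namespace Matrix

section CharpolyCoeff

variable {n R : Type*} [Fintype n] [DecidableEq n] [CommRing R] [LinearOrder R]
  [IsStrictOrderedRing R]

theorem charpoly_coeff_nonpos_of_principal_minors (M : Matrix n n R)
    (hM : ∀ S : Finset n, S.Nonempty →
      0 ≤ (-1 : R) ^ (S.card - 1) * (M.submatrix (Subtype.val : S → n) Subtype.val).det)
    {i : ℕ} (hi : i < Fintype.card n) : M.charpoly.coeff i ≤ 0 := by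
  obtain ⟨k, hk, rfl⟩ : ∃ k, k + 1 ≤ Fintype.card n ∧ i = Fintype.card n - (k + 1) :=
    ⟨Fintype.card n - (i + 1), by omega, by omega⟩
  rw [charpoly_coeff_eq_sum_minors M (k + 1) hk, pow_succ, mul_comm _ (-1 : R), mul_assoc,
    neg_one_mul, neg_nonpos, Finset.mul_sum]
  refine Finset.sum_nonneg fun S hS => ?_
  obtain ⟨-, hcard⟩ := Finset.mem_powersetCard.mp hS
  simpa [hcard] using hM S (Finset.card_pos.mp (by omega))

end CharpolyCoeff

theorem submatrix_eq_transpose_mul_mul {m n R : Type*} [Fintype m] [DecidableEq m] [CommSemiring R]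
    (A : Matrix m m R) (f : n → m) :
    A.submatrix f f =
      ((1 : Matrix m m R).submatrix id f)ᵀ * A * (1 : Matrix m m R).submatrix id f := by
  ext i j
  simp [Matrix.mul_apply, one_apply]

namespace IsHermitian

variable {m n k : Type*} [Fintype m] [DecidableEq m] [Fintype n] [DecidableEq n] [Fintype k]
  {A : Matrix m m ℝ}

theorem card_pos_eigenvalues_le_one_of_principal_minors (hA : A.IsHermitian)
    (hminors : ∀ S : Finset m, S.Nonempty →
      0 ≤ (-1 : ℝ) ^ (S.card - 1) * (A.submatrix (Subtype.val : S → m) Subtype.val).det) :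
    (Finset.univ.filter fun i => 0 < hA.eigenvalues i).card ≤ 1 := by
  calc (Finset.univ.filter fun i => 0 < hA.eigenvalues i).card
      = A.charpoly.roots.countP (0 < ·) := by
        simp [hA.roots_charpoly_eq_eigenvalues, Multiset.countP_map]; rfl
    _ ≤ signVariations A.charpoly := roots_countP_pos_le_signVariations _
    _ ≤ 1 := signVariations_le_one_of_coeff_nonpos fun i hi =>
        A.charpoly_coeff_nonpos_of_principal_minors hminors (A.charpoly_natDegree_eq_dim ▸ hi)

theorem dotProduct_mulVec_eq_sum_eigenvalues (hA : A.IsHermitian) (w : m → ℝ) :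
    w ⬝ᵥ (A *ᵥ w) =
      ∑ i, hA.eigenvalues i * ((hA.eigenvectorUnitary : Matrix m m ℝ)ᵀ *ᵥ w) i ^ 2 := by
  set U : Matrix m m ℝ := ↑hA.eigenvectorUnitary
  have hA' : A = U * diagonal hA.eigenvalues * Uᵀ := by
    conv_lhs => rw [hA.spectral_theorem]
    simp [U, star_eq_conjTranspose]
  conv_lhs => rw [hA']
  rw [← mulVec_mulVec, ← mulVec_mulVec, dotProduct_mulVec, ← mulVec_transpose, dotProduct]
  exact Finset.sum_congr rfl fun i _ => by rw [mulVec_diagonal]; ring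

theorem card_le_card_pos_eigenvalues (hA : A.IsHermitian) (X : Matrix m k ℝ)
    (hX : (Xᵀ * A * X).PosDef) :
    Fintype.card k ≤ (Finset.univ.filter fun i => 0 < hA.eigenvalues i).card := by
  set s := Finset.univ.filter fun i => 0 < hA.eigenvalues i
  set C : Matrix s k ℝ := ((hA.eigenvectorUnitary : Matrix m m ℝ)ᵀ * X).submatrix Subtype.val id
  by_contra! hlt
  obtain ⟨z, hz, hz0⟩ := Submodule.exists_mem_ne_zero_of_ne_bot
    (LinearMap.ker_ne_bot_of_finrank_lt (f := C.mulVecLin) (by simpa using hlt))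
  have hCz : ∀ i ∈ s, ((hA.eigenvectorUnitary : Matrix m m ℝ)ᵀ *ᵥ (X *ᵥ z)) i = 0 := fun i hi => by
    rw [mulVec_mulVec]
    exact congrFun (LinearMap.mem_ker.mp hz) ⟨i, hi⟩
  have hpos := hX.dotProduct_mulVec_pos hz0
  rw [star_trivial, ← mulVec_mulVec, ← mulVec_mulVec, dotProduct_mulVec, vecMul_transpose,
    hA.dotProduct_mulVec_eq_sum_eigenvalues] at hpos
  refine hpos.not_ge (Finset.sum_nonpos fun i _ => ?_)
  by_cases hi : i ∈ s
  · simp [hCz i hi]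
  · exact mul_nonpos_of_nonpos_of_nonneg (by simpa [s] using hi) (sq_nonneg _)

theorem card_pos_eigenvalues_le_of_eq_transpose_mul_mul {B : Matrix n n ℝ} (hA : A.IsHermitian)
    (hB : B.IsHermitian) (Y : Matrix m n ℝ) (hBA : B = Yᵀ * A * Y) :
    (Finset.univ.filter fun i => 0 < hB.eigenvalues i).card ≤
      (Finset.univ.filter fun i => 0 < hA.eigenvalues i).card := by
  set s := Finset.univ.filter fun i => 0 < hB.eigenvalues i
  set U : Matrix n n ℝ := ↑hB.eigenvectorUnitary
  set W : Matrix n s ℝ := U.submatrix id Subtype.val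
  have hdiag : Wᵀ * B * W = diagonal fun i : s => hB.eigenvalues i := by
    have h := hB.conjStarAlgAut_star_eigenvectorUnitary
    simp only [Unitary.conjStarAlgAut_apply, Unitary.coe_star, star_eq_conjTranspose,
      conjTranspose_eq_transpose_of_trivial, transpose_transpose] at h
    calc Wᵀ * B * W = (Uᵀ * B * U).submatrix Subtype.val Subtype.val := rfl
      _ = _ := by rw [h, submatrix_diagonal _ _ Subtype.val_injective]; rfl
  have hcongr : (Y * W)ᵀ * A * (Y * W) = Wᵀ * B * W := by
    rw [hBA, transpose_mul]
    simp only [Matrix.mul_assoc]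
  have hpos : ((Y * W)ᵀ * A * (Y * W)).PosDef := by
    rw [hcongr, hdiag, posDef_diagonal_iff]
    exact fun i => (Finset.mem_filter.mp i.2).2
  simpa using hA.card_le_card_pos_eigenvalues (Y * W) hpos

theorem zero_le_neg_one_pow_mul_det_submatrix (hA : A.IsHermitian) (hdiag : ∀ i, 0 ≤ A i i)
    (hcount : (Finset.univ.filter fun i => 0 < hA.eigenvalues i).card ≤ 1)
    (S : Finset m) (hS : S.Nonempty) :
    0 ≤ (-1 : ℝ) ^ (S.card - 1) * (A.submatrix (Subtype.val : S → m) Subtype.val).det := by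
  have hB := hA.submatrix (Subtype.val : S → m)
  have : Nonempty S := hS.to_subtype
  rw [hB.det_eq_prod_eigenvalues, ← Fintype.card_coe]
  refine zero_le_neg_one_pow_mul_prod_of_card_pos_le_one _ ?_ ?_
  · exact (hA.card_pos_eigenvalues_le_of_eq_transpose_mul_mul hB _
      (submatrix_eq_transpose_mul_mul A _)).trans hcount
  · rw [← hB.trace_eq_sum_eigenvalues]
    exact Finset.sum_nonneg fun i _ => hdiag i

end IsHermitian

end Matrix

/-- A real symmetric (Hermitian) matrix with nonnegative entries has at most one
positive eigenvalue iff every principal minor indexed by a nonempty `S` satisfies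
`(-1)^(|S|-1) det(A[S]) ≥ 0`. -/
theorem stmt0 {n : ℕ} (A : Matrix (Fin n) (Fin n) ℝ) (hA : A.IsHermitian)
    (hnn : ∀ i j, 0 ≤ A i j) :
    (Finset.univ.filter fun i => 0 < hA.eigenvalues i).card ≤ 1 ↔
      ∀ S : Finset (Fin n), S.Nonempty →
        0 ≤ (-1 : ℝ) ^ (S.card - 1) *
          (A.submatrix (fun i : {x // x ∈ S} => (i : Fin n))
            (fun i : {x // x ∈ S} => (i : Fin n))).det :=
  ⟨fun hcount => hA.zero_le_neg_one_pow_mul_det_submatrix (fun i => hnn i i) hcount,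
    hA.card_pos_eigenvalues_le_one_of_principal_minors⟩
end

section
/- Let M be the (n+1)×(n+1) real symmetric matrix with M_{00} = a, M_{0j} = M_{j0} = b for 1 ≤ j ≤ n, M_{jj} = b for 1 ≤ j ≤ n, and M_{jk} = c for 1 ≤ j ≠ k ≤ n, where a, b, c ≥ 0 and b > 0. Then M has at most one positive eigenvalue if and only if b ≤ c and ab + (n-1)ac ≤ nb². -/
/-!
Put the rows and columns `0` and `1` of `M` apart from the other `n - 1`. The vectors `e₀`,
`e₁ + ⋯ + eₙ` and `eₖ - e₁` (`2 ≤ k ≤ n`) form a basis in which `M` becomes block diagonal: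
a `2 × 2` block `[[a, n b], [b, b + (n - 1) c]]` and `b - c` repeated `n - 1` times. The
`2 × 2` block has positive trace, so it always contributes a positive eigenvalue, and a second
one exactly when its determinant `a (b + (n - 1) c) - n b²` is positive. Hence at most one
eigenvalue is positive iff `b - c ≤ 0` and that determinant is `≤ 0`.
-/

open Polynomial Matrix

section CommRing

variable {R ι : Type*} [CommRing R] [Fintype ι] [DecidableEq ι]

/-- `M` with index `0 ↦ inl 0`, `1 ↦ inl 1` and `k + 2 ↦ inr k`. -/
def hessianBlocks (a b c : R) : Matrix (Fin 2 ⊕ ι) (Fin 2 ⊕ ι) R :=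
  fromBlocks !![a, b; b, b] (of fun i _ => ![b, c] i) (of fun _ j => ![b, c] j)
    (of fun j k => if j = k then b else c)

/-- Columns `e₀`, `e₁ + ∑ₖ eₖ` and `eₖ - e₁` (`k : ι`). -/
def hessianEigenbasis : Matrix (Fin 2 ⊕ ι) (Fin 2 ⊕ ι) R :=
  fromBlocks 1 (of fun i _ => ![0, -1] i) (of fun _ j => ![0, 1] j) 1

def hessianReduced (a b c : R) : Matrix (Fin 2 ⊕ ι) (Fin 2 ⊕ ι) R :=
  fromBlocks !![a, (Fintype.card ι + 1) * b; b, b + Fintype.card ι * c] 0 0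
    (diagonal fun _ => b - c)

theorem sum_ite_eq_sub_add_card_mul (j : ι) (b c : R) :
    ∑ k, (if j = k then b else c) = b - c + Fintype.card ι * c := by
  have h (k : ι) : (if j = k then b else c) = (if j = k then b - c else 0) + c := by
    split_ifs <;> ring
  simp [h, Finset.sum_add_distrib]

theorem hessianBlocks_mul_eigenbasis (a b c : R) :
    hessianBlocks (ι := ι) a b c * hessianEigenbasis =
      hessianEigenbasis * hessianReduced a b c := by
  simp only [hessianBlocks, hessianEigenbasis, hessianReduced, fromBlocks_multiply, fromBlocks_inj]
  refine ⟨?_, ?_, ?_, ?_⟩ <;> ext i j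
  · fin_cases i <;> fin_cases j <;> simp [mul_apply, add_one_mul, add_comm]
  · fin_cases i <;> simp [mul_apply, diagonal_apply, vecHead, vecTail, neg_add_eq_sub]
  · fin_cases j <;> simp [mul_apply, sum_ite_eq_sub_add_card_mul]
    ring
  · simp [mul_apply, diagonal_apply]; split_ifs <;> ring

theorem det_hessianEigenbasis :
    (hessianEigenbasis : Matrix (Fin 2 ⊕ ι) (Fin 2 ⊕ ι) R).det = Fintype.card ι + 1 := by
  rw [hessianEigenbasis, det_fromBlocks_one₂₂, det_fin_two]
  simp [mul_apply, add_comm]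

end CommRing

section Field

variable {K ι : Type*} [Field K] [CharZero K] [Fintype ι] [DecidableEq ι]

theorem charpoly_hessianBlocks (a b c : K) :
    (hessianBlocks (ι := ι) a b c).charpoly =
      (X ^ 2 - C (a + b + Fintype.card ι * c) * X
        + C (a * (b + Fintype.card ι * c) - (Fintype.card ι + 1) * b ^ 2)) *
      (X - C (b - c)) ^ Fintype.card ι := by
  have hdet : IsUnit (hessianEigenbasis : Matrix (Fin 2 ⊕ ι) (Fin 2 ⊕ ι) K).det := by
    rw [det_hessianEigenbasis, isUnit_iff_ne_zero]
    exact Nat.cast_add_one_ne_zero _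
  have hconj : hessianBlocks (ι := ι) a b c =
      hessianEigenbasis * hessianReduced a b c * hessianEigenbasis⁻¹ := by
    rw [← hessianBlocks_mul_eigenbasis, mul_assoc, mul_nonsing_inv _ hdet, mul_one]
  obtain ⟨P, hP⟩ := (isUnit_iff_isUnit_det _).2 hdet
  rw [hconj, ← hP, charpoly_units_conj, hessianReduced, charpoly_fromBlocks_zero₁₂,
    charpoly_fin_two, charpoly_diagonal, Finset.prod_const, Finset.card_univ, trace_fin_two,
    det_fin_two]
  simp only [of_apply, cons_val', cons_val_zero, cons_val_one, empty_val', cons_val_fin_one,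
    map_add, map_sub, map_mul, map_pow]
  ring

theorem charpoly_eq_of_apply_eq {m : ℕ} {a b c : K}
    {M : Matrix (Fin (m + 2)) (Fin (m + 2)) K}
    (hM : ∀ i j, M i j =
      if i = 0 ∧ j = 0 then a
      else if i = 0 ∨ j = 0 then b
      else if i = j then b else c) :
    M.charpoly = (X ^ 2 - C (a + b + m * c) * X + C (a * (b + m * c) - (m + 1) * b ^ 2)) *
      (X - C (b - c)) ^ m := by
  let e : Fin 2 ⊕ Fin m ≃ Fin (m + 2) := finSumFinEquiv.trans (finCongr (add_comm 2 m))
  have hblocks : M.submatrix e e = hessianBlocks a b c := by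
    ext (i | j) (i' | k)
    · fin_cases i <;> fin_cases i' <;> simp [hM, hessianBlocks, e, Fin.ext_iff]
    · fin_cases i <;> simp [hM, hessianBlocks, e, Fin.ext_iff]
    · fin_cases i' <;> simp [hM, hessianBlocks, e, Fin.ext_iff]
    · simp [hM, hessianBlocks, e, Fin.ext_iff]
  rw [← charpoly_reindex e.symm, reindex_apply, Equiv.symm_symm, hblocks, charpoly_hessianBlocks,
    Fintype.card_fin]

end Field

theorem Matrix.IsHermitian.eigenvalues_eq_of_charpoly_eq {n : Type*} [Fintype n] [DecidableEq n]
    {A : Matrix n n ℝ} (hA : A.IsHermitian) {s : Multiset ℝ}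
    (h : A.charpoly = (s.map fun x => X - C x).prod) :
    Finset.univ.val.map hA.eigenvalues = s := by
  simpa [h] using hA.roots_charpoly_eq_eigenvalues.symm

theorem exists_add_eq_mul_eq_of_four_mul_le_sq {T D : ℝ} (h : 4 * D ≤ T ^ 2) :
    ∃ x y : ℝ, x + y = T ∧ x * y = D := by
  refine ⟨(T + √(T ^ 2 - 4 * D)) / 2, (T - √(T ^ 2 - 4 * D)) / 2, by ring, ?_⟩
  nlinarith [Real.sq_sqrt (sub_nonneg.2 h)]

theorem countP_pos_cons_cons_replicate_le_one_iff {x y μ : ℝ} {m : ℕ} (hm : m ≠ 0)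
    (hxy : 0 < x + y) :
    (x ::ₘ y ::ₘ Multiset.replicate m μ).countP (0 < ·) ≤ 1 ↔ μ ≤ 0 ∧ x * y ≤ 0 := by
  rw [Multiset.countP_cons, Multiset.countP_cons, ← Multiset.coe_replicate, Multiset.coe_countP,
    List.countP_replicate]
  have hpos : 0 < x ∨ 0 < y := by by_contra! h; linarith
  have hprod : x * y ≤ 0 ↔ ¬(0 < x ∧ 0 < y) :=
    ⟨fun h ⟨hx, hy⟩ => (mul_pos hx hy).not_ge h, fun h => by
      rcases hpos with hx | hy
      · exact mul_nonpos_of_nonneg_of_nonpos hx.le (not_lt.1 fun hy => h ⟨hx, hy⟩)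
      · exact mul_nonpos_of_nonpos_of_nonneg (not_lt.1 fun hx => h ⟨hx, hy⟩) hy.le⟩
  rw [hprod, ← not_lt]
  split_ifs <;> simp_all

/-- For the (n+1)×(n+1) symmetric matrix `M` with `M₀₀ = a`, `M₀ⱼ = Mⱼ₀ = b`,
`Mⱼⱼ = b`, and `Mⱼₖ = c` (j ≠ k, j,k ≥ 1), where `a,c ≥ 0`, `b > 0` and `n ≥ 2`:
`M` has at most one positive eigenvalue iff `b ≤ c` and `ab + (n-1)ac ≤ nb²`. -/
theorem stmt3 {n : ℕ} (hn : 2 ≤ n) (a b c : ℝ) (ha : 0 ≤ a) (hb : 0 < b) (hc : 0 ≤ c)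
    (M : Matrix (Fin (n + 1)) (Fin (n + 1)) ℝ)
    (hM : ∀ i j : Fin (n + 1), M i j =
      if i = 0 ∧ j = 0 then a
      else if i = 0 ∨ j = 0 then b
      else if i = j then b else c)
    (hherm : M.IsHermitian) :
    (Finset.univ.filter fun i => 0 < hherm.eigenvalues i).card ≤ 1 ↔
      b ≤ c ∧ a * b + ((n : ℝ) - 1) * a * c ≤ (n : ℝ) * b ^ 2 := by
  obtain ⟨m, rfl⟩ : ∃ m, n = m + 1 := ⟨n - 1, by omega⟩
  obtain ⟨x, y, hsum, hprod⟩ := exists_add_eq_mul_eq_of_four_mul_le_sq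
    (T := a + b + m * c) (D := a * (b + m * c) - (m + 1) * b ^ 2)
    (by nlinarith [sq_nonneg (a - b - m * c)])
  have hspec : Finset.univ.val.map hherm.eigenvalues = x ::ₘ y ::ₘ .replicate m (b - c) := by
    refine hherm.eigenvalues_eq_of_charpoly_eq ?_
    rw [charpoly_eq_of_apply_eq hM, ← hsum, ← hprod]
    simp only [Multiset.map_cons, Multiset.map_replicate, Multiset.prod_cons,
      Multiset.prod_replicate, map_add, map_mul]
    ring
  have hpos : 0 < x + y := by rw [hsum]; positivity
  have hcount : (Finset.univ.filter fun i => 0 < hherm.eigenvalues i).card =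
      (Finset.univ.val.map hherm.eigenvalues).countP (0 < ·) := by
    rw [Multiset.countP_map]; rfl
  rw [hcount, hspec, countP_pos_cons_cons_replicate_le_one_iff (by omega) hpos, hprod, sub_nonpos,
    sub_nonpos]
  push_cast
  constructor <;> rintro ⟨hbc, hD⟩ <;> exact ⟨hbc, by linarith⟩
end

section
/- (Rado) Let λ = (λ_1 ≥ ... ≥ λ_n) be a partition of d. A point t = (t_1,...,t_n) ∈ ℝ^n belongs to the permutohedron P(λ) if and only if ∑ t_i = d and for every nonempty subset {i_1,...,i_k} ⊆ [n], t_{i_1} + ... + t_{i_k} ≤ λ_1 + ... + λ_k. -/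
/-!
The Rado inequalities are linear and hold at every permutation of `λ`, since a `k`-element
subset sum of the antitone `λ` is at most `λ₁ + ⋯ + λₖ`; hence they hold on the convex hull.
Conversely, if `t` satisfies them but lies outside the (closed) hull, a linear functional
`f = ∑ cᵢ xᵢ` separates `t` from it. Ordering the coefficients `c` decreasingly by `τ`, the
inequalities say that `t ∘ τ` is majorized by `λ`, and Abel summation against the antitone
`c ∘ τ` gives `f t ≤ f (λ ∘ τ⁻¹)`, contradicting the separation.
-/

open Finset

namespace Fin

variable {n : ℕ}

lemma filter_val_lt_succ_eq_insert {k : ℕ} (hk : k < n) :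
    univ.filter (fun i : Fin n => (i : ℕ) < k + 1) =
      insert ⟨k, hk⟩ (univ.filter (fun i : Fin n => (i : ℕ) < k)) := by
  ext i
  simp only [mem_filter, mem_univ, true_and, mem_insert, Fin.ext_iff]
  omega

lemma filter_val_lt_succ_eq_Iic (k : Fin n) :
    univ.filter (fun i : Fin n => (i : ℕ) < k + 1) = Iic k := by
  ext i
  simp only [mem_filter, mem_univ, true_and, mem_Iic, Fin.le_def]
  omega

end Fin

section Majorization

variable {n : ℕ}

theorem Antitone.sum_le_sum_filter_val_lt_card {M : Type*} [AddCommMonoid M] [PartialOrder M]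
    [IsOrderedAddMonoid M] {l : Fin n → M} (hl : Antitone l) (T : Finset (Fin n)) :
    ∑ i ∈ T, l i ≤ ∑ i ∈ univ.filter (fun i : Fin n => (i : ℕ) < #T), l i := by
  induction T using Finset.induction_on_max with
  | empty => simp
  | insert a s ha ih =>
    have has : a ∉ s := fun h => lt_irrefl a (ha a h)
    have hcard : #s ≤ a := by
      simpa using card_le_card (show s ⊆ Iio a from fun x hx => mem_Iio.2 (ha x hx))
    rw [card_insert_of_notMem has, Fin.filter_val_lt_succ_eq_insert (hcard.trans_lt a.isLt),
      sum_insert has, sum_insert (by simp)]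
    exact add_le_add (hl (Fin.le_def.2 hcard)) ih

theorem Antitone.sum_comp_perm_le {M : Type*} [AddCommMonoid M] [PartialOrder M]
    [IsOrderedAddMonoid M] {l : Fin n → M} (hl : Antitone l) (σ : Equiv.Perm (Fin n))
    (S : Finset (Fin n)) :
    ∑ i ∈ S, l (σ i) ≤ ∑ i ∈ univ.filter (fun i : Fin n => (i : ℕ) < #S), l i := by
  simpa using hl.sum_le_sum_filter_val_lt_card (S.map σ.toEmbedding)

variable {R : Type*} [CommRing R] [LinearOrder R] [IsStrictOrderedRing R]

/-- Abel summation, by induction on `n`: adding the last index turns the inductive bound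
`b (last n) * (∑ of w over the first n indices)` into `b (last n) * ∑ i, w i`, and
`∑ i, w i ≤ 0` lets `b (last n)` be lowered to any `β`. -/
theorem Antitone.sum_mul_le_mul_sum {b w : Fin n → R} (hb : Antitone b)
    (hw : ∀ k, ∑ i ∈ Iic k, w i ≤ 0) {β : R} (hβ : ∀ i, β ≤ b i) :
    ∑ i, b i * w i ≤ β * ∑ i, w i := by
  induction n generalizing β with
  | zero => simp
  | succ n ih =>
    have hinit : ∑ i : Fin n, b i.castSucc * w i.castSucc ≤
        b (.last n) * ∑ i : Fin n, w i.castSucc :=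
      ih (hb.comp_monotone Fin.strictMono_castSucc.monotone)
        (fun k => by simpa [Fin.sum_Iic_castSucc] using hw k.castSucc)
        (fun i => hb (Fin.le_last _))
    have htot : ∑ i, w i ≤ 0 := by simpa [← Fin.top_eq_last, Iic_top] using hw (.last n)
    calc ∑ i, b i * w i
        ≤ b (.last n) * ∑ i : Fin n, w i.castSucc + b (.last n) * w (.last n) := by
          rw [Fin.sum_univ_castSucc]; exact add_le_add_left hinit _
      _ = b (.last n) * ∑ i, w i := by rw [Fin.sum_univ_castSucc (f := w), mul_add]
      _ ≤ β * ∑ i, w i := mul_le_mul_of_nonpos_right (hβ _) htot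

theorem Antitone.sum_mul_le_sum_mul_of_sum_Iic_le {b x y : Fin n → R} (hb : Antitone b)
    (hxy : ∀ k, ∑ i ∈ Iic k, x i ≤ ∑ i ∈ Iic k, y i) (hsum : ∑ i, x i = ∑ i, y i) :
    ∑ i, b i * x i ≤ ∑ i, b i * y i := by
  obtain ⟨β, hβ⟩ := (Set.finite_range b).bddBelow
  have := hb.sum_mul_le_mul_sum (w := x - y) (fun k => by simpa [sum_sub_distrib] using hxy k)
    (fun i => hβ ⟨i, rfl⟩)
  simpa [mul_sub, sum_sub_distrib, hsum] using this

end Majorization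

lemma isLinearMap_sum_apply {ι R : Type*} [Semiring R] (S : Finset ι) :
    IsLinearMap R (fun x : ι → R => ∑ i ∈ S, x i) :=
  ⟨fun _ _ => sum_add_distrib, fun r x => (mul_sum S x r).symm⟩

theorem LinearMap.apply_eq_sum_mul_single {ι R : Type*} [Fintype ι] [DecidableEq ι]
    [CommSemiring R] (f : (ι → R) →ₗ[R] R) (x : ι → R) :
    f x = ∑ i, f (Pi.single i 1) * x i := by
  rw [f.pi_apply_eq_sum_univ x]
  refine sum_congr rfl fun i _ => ?_
  rw [smul_eq_mul, mul_comm]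
  congr
  ext j
  simp [Pi.single_apply, eq_comm]

theorem exists_perm_apply_le_apply_comp {n : ℕ} {l t : Fin n → ℝ} (hsum : ∑ i, t i = ∑ i, l i)
    (hS : ∀ S : Finset (Fin n), S.Nonempty →
      ∑ i ∈ S, t i ≤ ∑ i ∈ univ.filter (fun i : Fin n => (i : ℕ) < #S), l i)
    (f : (Fin n → ℝ) →ₗ[ℝ] ℝ) : ∃ σ : Equiv.Perm (Fin n), f t ≤ f (l ∘ σ) := by
  set c : Fin n → ℝ := fun i => f (Pi.single i 1)
  -- `τ` lists the coefficients of `f` in decreasing order; `l ∘ τ⁻¹` is the vertex maximizing `f`.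
  set τ := Tuple.sort (-c)
  have hc : Antitone (c ∘ τ) := fun i j hij => neg_le_neg_iff.1 (Tuple.monotone_sort (-c) hij)
  have hf : ∀ x, f x = ∑ i, c (τ i) * x (τ i) := by
    intro x
    rw [Equiv.sum_comp τ (fun i => c i * x i), f.apply_eq_sum_mul_single]
  refine ⟨τ.symm, ?_⟩
  rw [hf, hf]
  simp only [Function.comp_apply, Equiv.symm_apply_apply]
  refine hc.sum_mul_le_sum_mul_of_sum_Iic_le (fun k => ?_) (by rw [Equiv.sum_comp, hsum])
  have := hS ((Iic k).map τ.toEmbedding) (by simp)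
  rwa [card_map, Fin.card_Iic, Fin.filter_val_lt_succ_eq_Iic, sum_map] at this

/-- Rado: `t ∈ P(λ)` iff `t` is a weak composition of `d` (nonnegative entries
summing to `d`) and for every nonempty `S ⊆ [n]`, `∑_{i ∈ S} t_i ≤ λ_1 + ⋯ + λ_{|S|}`. -/
theorem stmt10 {n : ℕ} (d : ℝ) (l : Fin n → ℝ)
    (hlA : Antitone l) (hlnn : ∀ i, 0 ≤ l i) (hld : ∑ i, l i = d) (t : Fin n → ℝ) :
    t ∈ convexHull ℝ {x : Fin n → ℝ | ∃ σ : Equiv.Perm (Fin n), x = l ∘ σ} ↔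
      ((∀ i, 0 ≤ t i) ∧ ∑ i, t i = d ∧
        ∀ S : Finset (Fin n), S.Nonempty →
          ∑ i ∈ S, t i ≤ ∑ i ∈ Finset.univ.filter (fun i : Fin n => (i : ℕ) < S.card), l i) := by
  set V := {x : Fin n → ℝ | ∃ σ : Equiv.Perm (Fin n), x = l ∘ σ}
  constructor
  · intro ht
    refine ⟨fun i => ?_, ?_, fun S _ => ?_⟩
    · refine convexHull_min ?_ (convex_halfSpace_ge (LinearMap.proj i).isLinear 0) ht
      rintro _ ⟨σ, rfl⟩
      exact hlnn _
    · refine convexHull_min ?_ (convex_hyperplane (isLinearMap_sum_apply univ) d) ht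
      rintro _ ⟨σ, rfl⟩
      simpa [← hld] using Equiv.sum_comp σ l
    · refine convexHull_min ?_ (convex_halfSpace_le (isLinearMap_sum_apply S) _) ht
      rintro _ ⟨σ, rfl⟩
      exact hlA.sum_comp_perm_le σ S
  · rintro ⟨-, htd, hS⟩
    by_contra ht
    have hV : V.Finite :=
      (Set.finite_range fun σ : Equiv.Perm (Fin n) => l ∘ σ).subset fun _ ⟨σ, hσ⟩ => ⟨σ, hσ.symm⟩
    obtain ⟨f, u, hfV, hut⟩ :=
      geometric_hahn_banach_closed_point (convex_convexHull ℝ V)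
        (hV.isClosed_convexHull (𝕜 := ℝ)) ht
    obtain ⟨σ, hσ⟩ := exists_perm_apply_le_apply_comp (htd.trans hld.symm) hS f.toLinearMap
    have hσV := hfV (l ∘ σ) (subset_convexHull ℝ V ⟨σ, rfl⟩)
    exact (hσV.trans hut).not_ge hσ
end

section
/- For all integers k ≥ ℓ ≥ 2, the ballot numbers satisfy (k+ℓ-3)·C_{k,ℓ}·C_{k-2,ℓ-2} ≤ (k+ℓ-2)·C_{k-1,ℓ-1}². -/
/-!
With `k = ℓ + s`, the ballot number is `C_{k,ℓ} = (s+1)/(k+1) · binom(k+ℓ, ℓ)`, and the three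
binomial coefficients involved are rational multiples of the middle one `B = binom(k+ℓ-2, ℓ-1)`.
The difference of the two sides is then `(s+1)² B²` times a polynomial in `s` and `ℓ - 3` with
nonnegative coefficients, divided by a positive denominator.
-/

def ballot (k l : ℕ) : ℤ := ((k + l).choose l : ℤ) - ((k + l).choose (l - 1) : ℤ)

section
variable {K : Type*} [Field K] [CharZero K]

theorem cast_ballot_succ (k r : ℕ) :
    (ballot k (r + 1) : K) = (k - r) / (k + 1) * ((k + (r + 1)).choose (r + 1) : ℕ) := by
  have h := Nat.choose_succ_right_eq (k + (r + 1)) r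
  rw [show k + (r + 1) - r = k + 1 by omega] at h
  have h' : ((k + (r + 1)).choose (r + 1) : K) * (r + 1) = ((k + (r + 1)).choose r) * (k + 1) := by
    exact_mod_cast h
  unfold ballot
  push_cast
  field_simp
  linear_combination h'

theorem cast_choose_add_add_two (a b : ℕ) :
    ((a + b + 2).choose (a + 1) : K) =
      (a + b + 2) * (a + b + 1) / ((a + 1) * (b + 1)) * (a + b).choose a := by
  have h₁ := Nat.add_one_mul_choose_eq (a + b) a
  have h₂ := Nat.choose_mul_succ_eq (a + b + 1) (a + 1)
  rw [show a + b + 1 + 1 - (a + 1) = b + 1 by omega] at h₂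
  have h₁' : ((a + b + 1 : ℕ) : K) * (a + b).choose a =
      (a + b + 1).choose (a + 1) * (a + 1) := by
    exact_mod_cast h₁
  have h₂' : ((a + b + 1).choose (a + 1) : K) * (a + b + 2) =
      (a + b + 2).choose (a + 1) * (b + 1) := by
    exact_mod_cast h₂
  push_cast at h₁'
  field_simp
  linear_combination (-(a + b + 2 : K)) * h₁' - (a + 1 : K) * h₂'
end

/-- Truncated subtraction makes this `0`, whereas the ballot number `C_{k,0}` is `1`. -/
theorem ballot_zero_right (k : ℕ) : ballot k 0 = 0 := by
  simp [ballot]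

theorem ballot_mul_ballot_le_sq (r s : ℕ) :
    (2 * r + s + 3 : ℤ) * ballot (r + s + 3) (r + 3) * ballot (r + s + 1) (r + 1) ≤
      (2 * r + s + 4 : ℤ) * ballot (r + s + 2) (r + 2) ^ 2 := by
  have hB : (((2 * r + s + 4).choose (r + 2) : ℕ) : ℚ) =
      (2 * r + s + 4) * (2 * r + s + 3) / ((r + 2) * (r + s + 2)) *
        ((r + s + 1 + (r + 1)).choose (r + 1) : ℕ) := by
    rw [show 2 * r + s + 4 = r + 1 + (r + s + 1) + 2 by ring, cast_choose_add_add_two,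
      add_comm (r + 1)]
    push_cast
    ring
  set B : ℚ := (((2 * r + s + 4).choose (r + 2) : ℕ) : ℚ)
  have hX : (ballot (r + s + 3) (r + 3) : ℚ) =
      (s + 1) * (2 * r + s + 6) * (2 * r + s + 5) / ((r + s + 4) * (r + 3) * (r + s + 3)) * B := by
    rw [cast_ballot_succ, show r + s + 3 + (r + 2 + 1) = r + 2 + (r + s + 2) + 2 by ring,
      cast_choose_add_add_two, show r + 2 + (r + s + 2) = 2 * r + s + 4 by ring]
    push_cast
    field_simp
    ring
  have hY : (ballot (r + s + 2) (r + 2) : ℚ) = (s + 1) / (r + s + 3) * B := by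
    rw [cast_ballot_succ, show r + s + 2 + (r + 1 + 1) = 2 * r + s + 4 by ring]
    push_cast
    ring
  have hZ : (ballot (r + s + 1) (r + 1) : ℚ) =
      (s + 1) * (r + 2) / ((2 * r + s + 4) * (2 * r + s + 3)) * B := by
    rw [hB, cast_ballot_succ]
    push_cast
    field_simp
    ring
  suffices h :
      ((2 * r + s + 3 : ℤ) * ballot (r + s + 3) (r + 3) * ballot (r + s + 1) (r + 1) : ℚ) ≤
      (2 * r + s + 4 : ℤ) * ballot (r + s + 2) (r + 2) ^ 2 by exact_mod_cast h
  have key : ((2 * r + s + 4 : ℤ) * ballot (r + s + 2) (r + 2) ^ 2 : ℚ) -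
      (2 * r + s + 3 : ℤ) * ballot (r + s + 3) (r + 3) * ballot (r + s + 1) (r + 1) =
      (s + 1) ^ 2 * B ^ 2 * (2 * r ^ 3 + 3 * r ^ 2 * s + 12 * r ^ 2 + 3 * r * s ^ 2 + 15 * r * s
        + 22 * r + s ^ 3 + 8 * s ^ 2 + 18 * s + 12) /
        ((r + s + 4) * (r + 3) * (r + s + 3) ^ 2 * (2 * r + s + 4)) := by
    rw [hX, hY, hZ]
    push_cast
    field_simp
    ring
  rw [← sub_nonneg, key]
  positivity

/-- For `k ≥ ℓ ≥ 2`,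
`(k+ℓ-3)·C_{k,ℓ}·C_{k-2,ℓ-2} ≤ (k+ℓ-2)·C_{k-1,ℓ-1}²`. -/
theorem stmt13 (k l : ℕ) (hl : 2 ≤ l) (hk : l ≤ k) :
    ((k : ℤ) + l - 3) * ballot k l * ballot (k - 2) (l - 2) ≤
      ((k : ℤ) + l - 2) * ballot (k - 1) (l - 1) ^ 2 := by
  obtain ⟨s, rfl⟩ := Nat.exists_eq_add_of_le hk
  obtain ⟨_ | r, rfl⟩ := Nat.exists_eq_add_of_le hl
  · rw [Nat.add_sub_cancel_left, ballot_zero_right, mul_zero]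
    exact mul_nonneg (by omega) (sq_nonneg _)
  · convert ballot_mul_ballot_le_sq r s using 3 <;> first | omega | (congr 1 <;> omega)
end

section
/- For positive integers m, n, the polynomial identity ∏_{i=1}^n ∏_{j=1}^m (x_i + y_j) = ∑_λ s_λ(x_1,...,x_n) · s_{(λ')^c}(y_1,...,y_m) holds, where the sum ranges over partitions λ with at most n parts and largest part at most m, λ' is the conjugate partition, and (λ')^c is the complement of λ' in the m×n rectangle, i.e., ((λ')^c)_k = n - λ'_{m+1-k}. -/
/-!
Evaluate the Vandermonde determinant of `z = (x₁, …, xₙ, -y₁, …, -yₘ)` in two ways. The product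
formula gives `V(x) · ∏ᵢₖ (-yₖ - xᵢ) · V(-y)`. Laplace expansion along the rows of `x` gives
`∑_S ε(S) · det(xᵢ ^ s)_{s ∈ S} · det((-yₖ) ^ t)_{t ∉ S}` over the `n`-subsets `S` of
`{0, …, n + m - 1}`, where `ε(S) = (-1) ^ (∑ S - n(n-1)/2)` is the sign of the shuffle listing `S`
first: moving an element of `S` one step down multiplies the shuffle by a transposition. Together
with the factor `(-1) ^ ∑ Sᶜ` coming from `-y`, the sign no longer depends on `S`.
The `n`-subsets are exactly the sets `{λⱼ + n - 1 - j}` for partitions `λ` in the `n × m` box, and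
the complement of such a set is `{μₖ + m - 1 - k}` with `μ = (λ')ᶜ`, because every cell of the box
lies either in `λ` or not. Dividing by `V(x) V(y)` turns both determinants into Schur polynomials.
-/

/-- The Schur polynomial in `m` variables via the bialternant formula
`s_λ = det(y_i^(λ_j + m - j)) / det(y_i^(m - j))`. -/
noncomputable def schur {m : ℕ} (lam : Fin m → ℕ) (y : Fin m → ℝ) : ℝ :=
  (Matrix.of fun i j : Fin m => y i ^ (lam j + (m - 1 - (j : ℕ)))).det /
    (Matrix.of fun i j : Fin m => y i ^ (m - 1 - (j : ℕ))).det

open Finset Equiv Matrix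

namespace DualCauchy

variable {n m : ℕ}

section Shuffle

lemma card_compl_of_card_eq {S : Finset (Fin (n + m))} (hS : #S = n) : #Sᶜ = m := by
  rw [card_compl, Fintype.card_fin, hS, Nat.add_sub_cancel_left]

noncomputable def shufflePerm (S : Finset (Fin (n + m))) (hS : #S = n) : Perm (Fin (n + m)) :=
  .ofBijective
    (Fin.addCases (S.orderEmbOfFin hS) (Sᶜ.orderEmbOfFin (card_compl_of_card_eq hS))) <| by
    refine Finite.surjective_iff_bijective.1 fun r => ?_
    by_cases hr : r ∈ S
    · obtain ⟨i, hi⟩ : r ∈ Set.range (S.orderEmbOfFin hS) := by simpa using hr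
      exact ⟨Fin.castAdd m i, by simpa using hi⟩
    · obtain ⟨k, hk⟩ : r ∈ Set.range (Sᶜ.orderEmbOfFin (card_compl_of_card_eq hS)) := by
        simpa using hr
      exact ⟨Fin.natAdd n k, by simpa using hk⟩

@[simp]
lemma shufflePerm_castAdd {S : Finset (Fin (n + m))} (hS : #S = n) (i : Fin n) :
    shufflePerm S hS (Fin.castAdd m i) = S.orderEmbOfFin hS i := by
  simp [shufflePerm]

@[simp]
lemma shufflePerm_natAdd {S : Finset (Fin (n + m))} (hS : #S = n) (k : Fin m) :
    shufflePerm S hS (Fin.natAdd n k) = Sᶜ.orderEmbOfFin (card_compl_of_card_eq hS) k := by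
  simp [shufflePerm]

lemma swap_lt_swap_of_adjacent {N : ℕ} {a b u v : Fin N} (hab : (b : ℕ) = a + 1) (huv : u < v)
    (h : ¬(u = a ∧ v = b)) : swap a b u < swap a b v := by
  rw [Fin.lt_def] at huv ⊢
  simp only [swap_apply_def]
  split_ifs <;> simp_all [Fin.ext_iff] <;> omega

lemma orderEmbOfFin_eq_swap_comp {N k : ℕ} {a b : Fin N} (hab : (b : ℕ) = a + 1)
    {T T' : Finset (Fin N)} (h : #T = k) (h' : #T' = k) (hT : ¬(a ∈ T ∧ b ∈ T))
    (hT' : ∀ x, x ∈ T' ↔ swap a b x ∈ T) :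
    ⇑(T'.orderEmbOfFin h') = swap a b ∘ T.orderEmbOfFin h := by
  refine (orderEmbOfFin_unique h' (fun i => by simp [hT']) fun i j hij => ?_).symm
  refine swap_lt_swap_of_adjacent hab ((T.orderEmbOfFin h).strictMono hij) fun ⟨hi, hj⟩ => hT ?_
  exact ⟨hi ▸ orderEmbOfFin_mem T h i, hj ▸ orderEmbOfFin_mem T h j⟩

lemma shufflePerm_map_swap {a b : Fin (n + m)} (hab : (b : ℕ) = a + 1)
    {S : Finset (Fin (n + m))} (hS : #S = n) (ha : a ∉ S) (hb : b ∈ S) :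
    shufflePerm (S.map (swap a b).toEmbedding) (by simpa using hS) =
      swap a b * shufflePerm S hS := by
  ext r : 1
  induction r using Fin.addCases with
  | left i =>
    simp only [shufflePerm_castAdd, Perm.mul_apply]
    rw [orderEmbOfFin_eq_swap_comp hab hS _ (by tauto) (by simp [mem_map_equiv])]
    rfl
  | right k =>
    simp only [shufflePerm_natAdd, Perm.mul_apply]
    rw [orderEmbOfFin_eq_swap_comp hab (card_compl_of_card_eq hS) _ (by simp [hb])
      (by simp [mem_map_equiv])]
    rfl

lemma eq_map_castAdd_of_pred_mem {S : Finset (Fin (n + m))} (hS : #S = n)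
    (hpred : ∀ a b : Fin (n + m), (b : ℕ) = a + 1 → b ∈ S → a ∈ S) :
    S = univ.map (Fin.castAddEmb m) := by
  have hdown : ∀ d (a b : Fin (n + m)), (a : ℕ) + d = b → b ∈ S → a ∈ S := by
    intro d
    induction d with
    | zero => intro a b h hb; rwa [Fin.ext (h : (a : ℕ) = b)]
    | succ d ih =>
      intro a b h hb
      exact hpred a ⟨a + 1, by omega⟩ rfl (ih _ b (by simp only; omega) hb)
  have hlt : ∀ b ∈ S, (b : ℕ) < n := fun b hb => by
    have hsub : Iic b ⊆ S := fun a ha => hdown (b - a) a b (by simp at ha; omega) hb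
    have := card_le_card hsub
    rw [Fin.card_Iic, hS] at this
    omega
  refine eq_of_subset_of_card_le (fun b hb => ?_) (by simp [hS])
  exact mem_map.2 ⟨⟨b, hlt b hb⟩, mem_univ _, rfl⟩

lemma shufflePerm_map_castAdd (hS : #(univ.map (Fin.castAddEmb m)) = n) :
    shufflePerm (univ.map (Fin.castAddEmb m)) hS = 1 := by
  ext r : 1
  induction r using Fin.addCases with
  | left i =>
    simp only [shufflePerm_castAdd, Perm.one_apply]
    rw [← orderEmbOfFin_unique hS (by simp) (Fin.strictMono_castAdd m)]
  | right k =>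
    simp only [shufflePerm_natAdd, Perm.one_apply]
    rw [← orderEmbOfFin_unique (card_compl_of_card_eq hS) (by simp [Fin.ext_iff]; omega)
      (Fin.strictMono_natAdd n)]

theorem sign_shufflePerm (S : Finset (Fin (n + m))) (hS : #S = n) :
    (Perm.sign (shufflePerm S hS) : ℤ) =
      (-1) ^ (∑ s ∈ S, (s : ℕ) + ∑ i : Fin n, (i : ℕ)) := by
  induction h : ∑ s ∈ S, (s : ℕ) using Nat.strong_induction_on generalizing S with
  | _ t IH =>
  by_cases hstep : ∃ a b : Fin (n + m), (b : ℕ) = a + 1 ∧ a ∉ S ∧ b ∈ S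
  · obtain ⟨a, b, hab, ha, hb⟩ := hstep
    have hne : a ≠ b := fun h => by simp [h] at hab
    have hfix : ∀ s ∈ S.erase b, (swap a b s : ℕ) = s := fun s hs => by
      rw [swap_apply_of_ne_of_ne (ne_of_mem_of_not_mem (mem_of_mem_erase hs) ha)
        (ne_of_mem_erase hs)]
    have hsum : ∑ s ∈ S.map (swap a b).toEmbedding, (s : ℕ) + 1 = t := by
      rw [← add_sum_erase S _ hb, ← sum_congr rfl hfix] at h
      simp only [sum_map, toEmbedding_apply]
      rw [← add_sum_erase S _ hb, swap_apply_right]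
      omega
    have hsign := IH (∑ s ∈ S.map (swap a b).toEmbedding, (s : ℕ)) (by omega) _
      (by simpa using hS) rfl
    rw [shufflePerm_map_swap hab hS ha hb, Perm.sign_mul, Perm.sign_swap hne] at hsign
    rw [← hsum, add_right_comm, pow_succ, ← hsign]
    push_cast
    ring
  · obtain rfl := eq_map_castAdd_of_pred_mem hS fun a b hab hb =>
      by_contra fun ha => hstep ⟨a, b, hab, ha, hb⟩
    rw [shufflePerm_map_castAdd, ← h, sum_map]
    simp [← two_mul, pow_mul]

end Shuffle

section Laplace

variable {R : Type*} [CommRing R]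

def blockPerm (τ : Perm (Fin n)) (ρ : Perm (Fin m)) : Perm (Fin (n + m)) :=
  finSumFinEquiv.permCongr (τ.sumCongr ρ)

@[simp]
lemma blockPerm_castAdd (τ : Perm (Fin n)) (ρ : Perm (Fin m)) (i : Fin n) :
    blockPerm τ ρ (Fin.castAdd m i) = Fin.castAdd m (τ i) := by
  simp [blockPerm]

@[simp]
lemma blockPerm_natAdd (τ : Perm (Fin n)) (ρ : Perm (Fin m)) (k : Fin m) :
    blockPerm τ ρ (Fin.natAdd n k) = Fin.natAdd n (ρ k) := by
  simp [blockPerm]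

@[simp]
lemma sign_blockPerm (τ : Perm (Fin n)) (ρ : Perm (Fin m)) :
    Perm.sign (blockPerm τ ρ) = Perm.sign τ * Perm.sign ρ := by
  simp [blockPerm]

noncomputable def laplacePerm
    (p : {S : Finset (Fin (n + m)) // #S = n} × Perm (Fin n) × Perm (Fin m)) :
    Perm (Fin (n + m)) :=
  shufflePerm p.1.1 p.1.2 * blockPerm p.2.1 p.2.2

lemma range_laplacePerm_castAdd
    (p : {S : Finset (Fin (n + m)) // #S = n} × Perm (Fin n) × Perm (Fin m)) :
    Set.range (laplacePerm p ∘ Fin.castAdd m) = p.1.1 := by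
  obtain ⟨⟨S, hS⟩, τ, ρ⟩ := p
  have : laplacePerm (⟨S, hS⟩, τ, ρ) ∘ Fin.castAdd m = S.orderEmbOfFin hS ∘ τ := by
    ext i; simp [laplacePerm]
  rw [this, EquivLike.range_comp, range_orderEmbOfFin]

lemma laplacePerm_injective : (laplacePerm (n := n) (m := m)).Injective := by
  rintro ⟨⟨S, hS⟩, τ, ρ⟩ ⟨⟨T, hT⟩, τ', ρ'⟩ hpq
  obtain rfl : S = T := by
    have := range_laplacePerm_castAdd (⟨S, hS⟩, τ, ρ)
    rwa [hpq, range_laplacePerm_castAdd, coe_inj, eq_comm] at this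
  have hblock : blockPerm τ ρ = blockPerm τ' ρ' := mul_left_cancel hpq
  have hτ : τ = τ' := Perm.ext fun i => Fin.castAdd_injective n m <| by
    simpa using congrArg (· (Fin.castAdd m i)) hblock
  have hρ : ρ = ρ' := Perm.ext fun k => Fin.natAdd_injective m n <| by
    simpa using congrArg (· (Fin.natAdd n k)) hblock
  rw [hτ, hρ]

lemma laplacePerm_surjective : (laplacePerm (n := n) (m := m)).Surjective := by
  classical
  intro σ
  set S := univ.image (σ ∘ Fin.castAdd m)
  have hS : #S = n := by
    rw [card_image_of_injective _ (σ.injective.comp (Fin.castAdd_injective n m)), card_fin]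
  have hmaps : Set.MapsTo (finSumFinEquiv.symm.permCongr ((shufflePerm S hS)⁻¹ * σ))
      (Set.range Sum.inl) (Set.range Sum.inl) := by
    rintro _ ⟨i, rfl⟩
    obtain ⟨j, hj⟩ : σ (Fin.castAdd m i) ∈ Set.range (S.orderEmbOfFin hS) := by
      simp [S]
    refine ⟨j, ?_⟩
    rw [permCongr_apply, symm_symm, finSumFinEquiv_apply_left, Perm.mul_apply, ← hj,
      ← shufflePerm_castAdd hS, Perm.inv_def, symm_apply_apply,
      finSumFinEquiv_symm_apply_castAdd]
  obtain ⟨⟨τ, ρ⟩, hτρ⟩ := Perm.mem_sumCongrHom_range_of_perm_mapsTo_inl hmaps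
  refine ⟨(⟨S, hS⟩, τ, ρ), ?_⟩
  have : blockPerm τ ρ = (shufflePerm S hS)⁻¹ * σ := by
    change finSumFinEquiv.permCongr (Perm.sumCongrHom _ _ (τ, ρ)) = _
    rw [hτρ]
    ext r
    simp
  simp [laplacePerm, this]

lemma det_eq_sum_prod_apply {ι : Type*} [Fintype ι] [DecidableEq ι] (M : Matrix ι ι R) :
    M.det = ∑ σ : Perm ι, (Perm.sign σ : R) * ∏ i, M i (σ i) := by
  rw [← det_transpose, det_apply']
  rfl

theorem det_eq_sum_shufflePerm (M : Matrix (Fin (n + m)) (Fin (n + m)) R) :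
    M.det = ∑ S : {S : Finset (Fin (n + m)) // #S = n},
      (Perm.sign (shufflePerm S.1 S.2) : R) *
        (M.submatrix (Fin.castAdd m) (S.1.orderEmbOfFin S.2)).det *
        (M.submatrix (Fin.natAdd n) (S.1ᶜ.orderEmbOfFin (card_compl_of_card_eq S.2))).det := by
  rw [det_eq_sum_prod_apply,
    ← Fintype.sum_bijective _ ⟨laplacePerm_injective, laplacePerm_surjective⟩
      (fun p => (Perm.sign (laplacePerm p) : R) * ∏ r, M r (laplacePerm p r)) _ fun _ => rfl,
    Fintype.sum_prod_type]
  refine sum_congr rfl fun S _ => ?_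
  rw [Fintype.sum_prod_type, mul_assoc, det_eq_sum_prod_apply, det_eq_sum_prod_apply, sum_mul_sum, mul_sum]
  refine sum_congr rfl fun τ _ => ?_
  rw [mul_sum]
  refine sum_congr rfl fun ρ _ => ?_
  simp only [submatrix_apply, laplacePerm, Perm.sign_mul, sign_blockPerm, Fin.prod_univ_add,
    Perm.mul_apply, blockPerm_castAdd, blockPerm_natAdd, shufflePerm_castAdd, shufflePerm_natAdd]
  push_cast
  ring

end Laplace

section Alternant

variable {R : Type*} [CommRing R]

def alternant {p : ℕ} (x : Fin p → R) (e : Fin p → ℕ) : R :=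
  (of fun i j => x i ^ e j).det

lemma alternant_neg {p : ℕ} (x : Fin p → R) (e : Fin p → ℕ) :
    alternant (-x) e = (-1) ^ (∑ j, e j) * alternant x e := by
  have : (of fun i j => (-x) i ^ e j) =
      of fun i j => (-1) ^ e j * (of fun i j => x i ^ e j) i j := by
    ext i j
    rw [of_apply, of_apply, of_apply, Pi.neg_apply, neg_pow]
  rw [alternant, alternant, this, det_mul_row, prod_pow_eq_pow_sum]

lemma alternant_comp_perm {p : ℕ} (x : Fin p → R) (e : Fin p → ℕ) (σ : Perm (Fin p)) :
    alternant x (e ∘ σ) = Perm.sign σ * alternant x e :=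
  det_permute' σ (of fun i j => x i ^ e j)

theorem det_vandermonde_append (x : Fin n → R) (w : Fin m → R) :
    (vandermonde (Fin.append x w)).det =
      (vandermonde x).det * (∏ i, ∏ k, (w k - x i)) * (vandermonde w).det := by
  simp only [det_vandermonde, ← filter_lt_eq_Ioi, prod_filter, Fin.prod_univ_add,
    Fin.append_left, Fin.append_right]
  have hcc (i j : Fin n) : Fin.castAdd m i < Fin.castAdd m j ↔ i < j :=
    (Fin.strictMono_castAdd m).lt_iff_lt
  have hcn (i : Fin n) (k : Fin m) : Fin.castAdd m i < Fin.natAdd n k := by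
    simp only [Fin.lt_def, Fin.val_castAdd, Fin.val_natAdd]; omega
  have hnc (i : Fin n) (k : Fin m) : ¬Fin.natAdd n k < Fin.castAdd m i := by
    simp only [Fin.lt_def, Fin.val_castAdd, Fin.val_natAdd]; omega
  simp [hcc, hcn, hnc, Fin.natAdd_lt_natAdd_iff, prod_mul_distrib, mul_assoc]

lemma sum_val_orderEmbOfFin {N k : ℕ} (S : Finset (Fin N)) (h : #S = k) :
    ∑ j, (S.orderEmbOfFin h j : ℕ) = ∑ s ∈ S, (s : ℕ) := by
  conv_rhs => rw [← image_orderEmbOfFin_univ S h]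
  rw [sum_image fun _ _ _ _ hij => (S.orderEmbOfFin h).injective hij]

lemma sign_shufflePerm_mul_neg_one_pow (S : Finset (Fin (n + m))) (hS : #S = n) :
    (Perm.sign (shufflePerm S hS) : R) *
        (-1) ^ (∑ k, (Sᶜ.orderEmbOfFin (card_compl_of_card_eq hS) k : ℕ)) =
      (-1) ^ (n * m + ∑ k : Fin m, (k : ℕ)) := by
  have hsum : ∑ s ∈ S, (s : ℕ) + ∑ s ∈ Sᶜ, (s : ℕ) =
      ∑ i : Fin n, (i : ℕ) + (n * m + ∑ k : Fin m, (k : ℕ)) := by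
    rw [sum_add_sum_compl, Fin.sum_univ_add]
    simp [sum_add_distrib, mul_comm]
  rw [sum_val_orderEmbOfFin, sign_shufflePerm]
  push_cast
  rw [← pow_add, add_right_comm, hsum, add_comm, ← add_assoc, ← two_mul, pow_add, pow_mul]
  simp

theorem prod_add_mul_det_vandermonde_eq_sum_alternant (x : Fin n → R) (y : Fin m → R) :
    (∏ i, ∏ k, (x i + y k)) * ((vandermonde x).det * (vandermonde y).det) =
      ∑ S : {S : Finset (Fin (n + m)) // #S = n},
        alternant x (fun j => S.1.orderEmbOfFin S.2 j) *
          alternant y (fun k => S.1ᶜ.orderEmbOfFin (card_compl_of_card_eq S.2) k) := by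
  have hprod : ∏ i, ∏ k, ((-y) k - x i) = (-1) ^ (n * m) * ∏ i, ∏ k, (x i + y k) := by
    simp_rw [Pi.neg_apply, ← neg_add', add_comm (y _), prod_neg, prod_mul_distrib]
    rw [prod_const, card_univ, card_univ, Fintype.card_fin, Fintype.card_fin, ← pow_mul,
      mul_comm m]
  have hy : (vandermonde (-y)).det = (-1) ^ (∑ k : Fin m, (k : ℕ)) * (vandermonde y).det :=
    alternant_neg y _
  refine ((isUnit_neg_one (α := R)).pow (n * m + ∑ k : Fin m, (k : ℕ))).mul_left_cancel ?_
  calc _ = (vandermonde x).det * (∏ i, ∏ k, ((-y) k - x i)) * (vandermonde (-y)).det := by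
        rw [hprod, hy]; ring
    _ = (vandermonde (Fin.append x (-y))).det := (det_vandermonde_append x (-y)).symm
    _ = _ := by
      rw [det_eq_sum_shufflePerm, mul_sum]
      refine sum_congr rfl fun S _ => ?_
      have hx : (vandermonde (Fin.append x (-y))).submatrix (Fin.castAdd m)
          (S.1.orderEmbOfFin S.2) = of fun i j => x i ^ (S.1.orderEmbOfFin S.2 j : ℕ) := by
        ext; simp [vandermonde_apply]
      have hy : (vandermonde (Fin.append x (-y))).submatrix (Fin.natAdd n)
            (S.1ᶜ.orderEmbOfFin (card_compl_of_card_eq S.2)) =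
          of fun i k => (-y) i ^ (S.1ᶜ.orderEmbOfFin (card_compl_of_card_eq S.2) k : ℕ) := by
        ext; simp [vandermonde_apply]
      rw [hx, hy, ← alternant, ← alternant, alternant_neg,
        ← sign_shufflePerm_mul_neg_one_pow S.1 S.2]
      ring

end Alternant

section Partitions

lemma val_add_sub_le_of_strictMono {p N : ℕ} {e : Fin p → Fin N} (he : StrictMono e)
    {a b : Fin p} (hab : a ≤ b) : (e a : ℕ) + ((b : ℕ) - a) ≤ e b := by
  have hsub : (Icc a b).image e ⊆ Icc (e a) (e b) := by
    intro r hr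
    obtain ⟨c, hc, rfl⟩ := mem_image.1 hr
    rw [mem_Icc] at hc ⊢
    exact ⟨he.monotone hc.1, he.monotone hc.2⟩
  have := card_le_card hsub
  rw [card_image_of_injective _ he.injective, Fin.card_Icc, Fin.card_Icc] at this
  have : (e a : ℕ) ≤ e b := he.monotone hab
  omega

lemma val_bounds_of_strictMono {p q : ℕ} {e : Fin p → Fin (p + q)} (he : StrictMono e)
    (i : Fin p) :
    (i : ℕ) ≤ e i ∧ (e i : ℕ) ≤ i + q := by
  have h0 := val_add_sub_le_of_strictMono he (a := ⟨0, i.pos⟩) (b := i)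
    (Fin.le_def.2 (Nat.zero_le _))
  have h1 := val_add_sub_le_of_strictMono he (a := i) (b := ⟨p - 1, by omega⟩)
    (Fin.le_def.2 (by simp only; omega))
  have := (e ⟨p - 1, by omega⟩).isLt
  simp only at h0 h1
  omega

lemma le_iff_lt_card_filter {f : Fin n → ℕ} (hf : Antitone f) (c : ℕ) (i : Fin n) :
    c ≤ f i ↔ (i : ℕ) < #{i' | c ≤ f i'} := by
  constructor
  · intro hc
    have : Iic i ⊆ ({i' | c ≤ f i'} : Finset _) := fun i' hi' => by
      simpa using hc.trans (hf (mem_Iic.1 hi'))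
    have := card_le_card this
    rw [Fin.card_Iic] at this
    omega
  · intro hi
    by_contra hc
    have : ({i' | c ≤ f i'} : Finset _) ⊆ Iio i := fun i' hi' => by
      simp only [mem_filter, mem_univ, true_and] at hi'
      exact mem_Iio.2 (lt_of_not_ge fun h => hc (hi'.trans (hf h)))
    have := card_le_card this
    rw [Fin.card_Iio] at this
    omega

variable (l : Fin n → Fin (m + 1))

def shiftedPart (j : Fin n) : Fin (n + m) := ⟨l j + (n - 1 - j), by omega⟩

-- `(λ')ᶜ`: the count `#{i | c ≤ λᵢ}` is `λ'_c`, taken here at `c = m - k`.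
def dualPart (k : Fin m) : ℕ := n - #{i | (Fin.rev k : ℕ) + 1 ≤ (l i : ℕ)}

def shiftedDualPart (k : Fin m) : Fin (n + m) :=
  ⟨dualPart l k + (m - 1 - k), by unfold dualPart; omega⟩

def shiftedPartSet : Finset (Fin (n + m)) := univ.image (shiftedPart l)

variable {l}

lemma shiftedPart_strictAnti (hl : Antitone fun i => (l i : ℕ)) : StrictAnti (shiftedPart l) :=
  fun j j' h => by
    have : (l j' : ℕ) ≤ l j := hl h.le
    simp only [shiftedPart, Fin.lt_def] at h ⊢
    omega

lemma shiftedDualPart_strictAnti : StrictAnti (shiftedDualPart l) := fun k k' h => by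
  have : #{i | (Fin.rev k : ℕ) + 1 ≤ (l i : ℕ)} ≤
      #{i | (Fin.rev k' : ℕ) + 1 ≤ (l i : ℕ)} :=
    card_le_card fun i => by simp [Fin.val_rev]; omega
  simp only [shiftedDualPart, dualPart, Fin.lt_def] at h ⊢
  omega

lemma shiftedPart_ne_shiftedDualPart (hl : Antitone fun i => (l i : ℕ)) (j : Fin n) (k : Fin m) :
    shiftedPart l j ≠ shiftedDualPart l k := by
  have hj := le_iff_lt_card_filter hl ((Fin.rev k : ℕ) + 1) j
  have hcard : #{i | (Fin.rev k : ℕ) + 1 ≤ (l i : ℕ)} ≤ n :=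
    (card_filter_le _ _).trans_eq (card_fin n)
  simp only [shiftedPart, shiftedDualPart, dualPart, ne_eq, Fin.mk.injEq, Fin.val_rev] at hj ⊢
  omega

variable (hl : Antitone fun i => (l i : ℕ))
include hl

lemma card_shiftedPartSet : #(shiftedPartSet l) = n := by
  rw [shiftedPartSet, card_image_of_injective _ (shiftedPart_strictAnti hl).injective, card_fin]

lemma orderEmbOfFin_shiftedPartSet (j : Fin n) :
    (shiftedPartSet l).orderEmbOfFin (card_shiftedPartSet hl) j = shiftedPart l j.rev :=
  (congrFun (orderEmbOfFin_unique (card_shiftedPartSet hl) (f := shiftedPart l ∘ Fin.rev)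
    (fun _ => mem_image_of_mem _ (mem_univ _))
    ((shiftedPart_strictAnti hl).comp Fin.rev_strictAnti)) j).symm

lemma orderEmbOfFin_compl_shiftedPartSet (k : Fin m) :
    (shiftedPartSet l)ᶜ.orderEmbOfFin (card_compl_of_card_eq (card_shiftedPartSet hl)) k =
      shiftedDualPart l k.rev := by
  have hmem (k : Fin m) : shiftedDualPart l k ∈ (shiftedPartSet l)ᶜ := by
    simpa [shiftedPartSet] using fun j => shiftedPart_ne_shiftedDualPart hl j k
  exact (congrFun (orderEmbOfFin_unique (card_compl_of_card_eq (card_shiftedPartSet hl))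
    (f := shiftedDualPart l ∘ Fin.rev) (fun _ => hmem _)
    (shiftedDualPart_strictAnti.comp Fin.rev_strictAnti)) k).symm

omit hl
variable {S : Finset (Fin (n + m))} (hS : #S = n)

lemma orderEmbOfFin_rev_bounds (j : Fin n) :
    n - 1 - j ≤ (S.orderEmbOfFin hS j.rev : ℕ) ∧
      (S.orderEmbOfFin hS j.rev : ℕ) ≤ n - 1 - j + m := by
  have := val_bounds_of_strictMono (S.orderEmbOfFin hS).strictMono j.rev
  rw [Fin.val_rev] at this
  exact ⟨by omega, by omega⟩

def partitionOfSet : Fin n → Fin (m + 1) := fun j =>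
  ⟨(S.orderEmbOfFin hS j.rev : ℕ) - (n - 1 - j), by
    have := orderEmbOfFin_rev_bounds hS j
    omega⟩

lemma antitone_partitionOfSet : Antitone fun i => (partitionOfSet hS i : ℕ) := fun j j' h => by
  have hgap : (S.orderEmbOfFin hS j'.rev : ℕ) + ((j.rev : Fin n) - (j'.rev : Fin n)) ≤
      S.orderEmbOfFin hS j.rev :=
    val_add_sub_le_of_strictMono (S.orderEmbOfFin hS).strictMono (Fin.rev_anti h)
  have hj := orderEmbOfFin_rev_bounds hS j
  have hj' := orderEmbOfFin_rev_bounds hS j'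
  have hjj' : (j : ℕ) ≤ j' := h
  rw [Fin.val_rev, Fin.val_rev] at hgap
  simp only [partitionOfSet]
  omega

lemma shiftedPartSet_partitionOfSet : shiftedPartSet (partitionOfSet hS) = S := by
  have : shiftedPart (partitionOfSet hS) = S.orderEmbOfFin hS ∘ Fin.revPerm := by
    refine funext fun j => Fin.ext ?_
    have := orderEmbOfFin_rev_bounds hS j
    simp only [shiftedPart, partitionOfSet, Function.comp_apply, Fin.revPerm_apply]
    omega
  rw [← coe_inj, shiftedPartSet, coe_image, coe_univ, Set.image_univ, this, EquivLike.range_comp,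
    range_orderEmbOfFin]

def partitionEquiv :
    {l : Fin n → Fin (m + 1) // Antitone fun i => (l i : ℕ)} ≃
      {S : Finset (Fin (n + m)) // #S = n} where
  toFun l := ⟨shiftedPartSet l.1, card_shiftedPartSet l.2⟩
  invFun S := ⟨partitionOfSet S.2, antitone_partitionOfSet S.2⟩
  left_inv l := Subtype.ext <| funext fun j => Fin.ext <| by
    simp [partitionOfSet, orderEmbOfFin_shiftedPartSet l.2, shiftedPart]
  right_inv S := Subtype.ext (shiftedPartSet_partitionOfSet S.2)

end Partitions

lemma schur_eq_alternant_div {p : ℕ} (lam : Fin p → ℕ) (y : Fin p → ℝ) :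
    schur lam y = alternant y (fun j => lam j.rev + j) / (vandermonde y).det := by
  have hnum : (fun j : Fin p => lam j.rev + (j : ℕ)) =
      (fun j : Fin p => lam j + (p - 1 - (j : ℕ))) ∘ Fin.revPerm := funext fun j => by
    simp only [Function.comp_apply, Fin.revPerm_apply, Fin.val_rev]
    omega
  have hden : (fun j : Fin p => (j : ℕ)) = (fun j : Fin p => p - 1 - (j : ℕ)) ∘ Fin.revPerm :=
    funext fun j => by
      simp only [Function.comp_apply, Fin.revPerm_apply, Fin.val_rev]
      omega
  have hsign : ((Perm.sign (Fin.revPerm : Perm (Fin p)) : ℤ) : ℝ) ≠ 0 :=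
    Int.cast_ne_zero.2 (Units.ne_zero _)
  rw [show (vandermonde y).det = alternant y (fun j => (j : ℕ)) from rfl, hnum, hden,
    alternant_comp_perm, alternant_comp_perm, mul_div_mul_left _ _ hsign]
  rfl

lemma schur_mul_schur_dualPart (x : Fin n → ℝ) (y : Fin m → ℝ)
    (l : {l : Fin n → Fin (m + 1) // Antitone fun i => (l i : ℕ)}) :
    schur (fun i => (l.1 i : ℕ)) x * schur (dualPart l.1) y =
      alternant x (fun j => (partitionEquiv l).1.orderEmbOfFin (partitionEquiv l).2 j) *
        alternant y (fun k => (partitionEquiv l).1ᶜ.orderEmbOfFin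
          (card_compl_of_card_eq (partitionEquiv l).2) k) /
        ((vandermonde x).det * (vandermonde y).det) := by
  have hx : (fun j => ((partitionEquiv l).1.orderEmbOfFin (partitionEquiv l).2 j : ℕ)) =
      fun j : Fin n => (l.1 j.rev : ℕ) + j := funext fun j => by
    simp only [partitionEquiv, Equiv.coe_fn_mk, orderEmbOfFin_shiftedPartSet l.2, shiftedPart,
      Fin.val_rev]
    omega
  have hy : (fun k => ((partitionEquiv l).1ᶜ.orderEmbOfFin
        (card_compl_of_card_eq (partitionEquiv l).2) k : ℕ)) =
      fun k : Fin m => dualPart l.1 k.rev + k := funext fun k => by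
    simp only [partitionEquiv, Equiv.coe_fn_mk, orderEmbOfFin_compl_shiftedPartSet l.2,
      shiftedDualPart, Fin.val_rev]
    omega
  rw [schur_eq_alternant_div, schur_eq_alternant_div, div_mul_div_comm, hx, hy]

end DualCauchy

open DualCauchy

open Classical in
theorem stmt16_general {m n : ℕ}
    (x : Fin n → ℝ) (y : Fin m → ℝ)
    (hx : Function.Injective x) (hy : Function.Injective y) :
    ∏ i, ∏ j, (x i + y j) =
      ∑ l : Fin n → Fin (m + 1),
        if Antitone (fun i => ((l i : ℕ))) then
          schur (fun i => (l i : ℕ)) x *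
            schur (fun k : Fin m =>
              n - (Finset.univ.filter fun i : Fin n =>
                    ((Fin.rev k : ℕ) + 1 ≤ (l i : ℕ))).card) y
        else 0 := by
  have hV : (vandermonde x).det * (vandermonde y).det ≠ 0 :=
    mul_ne_zero (det_vandermonde_ne_zero_iff.2 hx) (det_vandermonde_ne_zero_iff.2 hy)
  calc ∏ i, ∏ j, (x i + y j)
      = (∏ i, ∏ j, (x i + y j)) * ((vandermonde x).det * (vandermonde y).det) /
          ((vandermonde x).det * (vandermonde y).det) := (mul_div_cancel_right₀ _ hV).symm
    _ = ∑ l : {l : Fin n → Fin (m + 1) // Antitone fun i => (l i : ℕ)},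
          schur (fun i => (l.1 i : ℕ)) x * schur (dualPart l.1) y := by
      rw [prod_add_mul_det_vandermonde_eq_sum_alternant, sum_div, ← partitionEquiv.sum_comp]
      exact sum_congr rfl fun l _ => (schur_mul_schur_dualPart x y l).symm
    _ = _ := by
      rw [← sum_filter, sum_subtype (F := inferInstance) _ fun _ => mem_filter_univ _]
      rfl

open Classical in
/-- `∏_{i=1}^n ∏_{j=1}^m (x_i + y_j) = ∑_λ s_λ(x) s_{(λ')ᶜ}(y)`, summing over
partitions `λ` with at most `n` parts and parts at most `m`, where `λ'` is the conjugate
partition (`λ'_j = #{i : λ_i ≥ j}`) and `(λ')ᶜ` its complement in the `m×n` rectangle,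
`((λ')ᶜ)_k = n - λ'_{m+1-k}`.  (Stated at points with pairwise distinct coordinates so the
bialternant denominators are nonzero.) -/
theorem stmt16 {m n : ℕ} (hm : 0 < m) (hn : 0 < n)
    (x : Fin n → ℝ) (y : Fin m → ℝ)
    (hx : Function.Injective x) (hy : Function.Injective y) :
    ∏ i, ∏ j, (x i + y j) =
      ∑ l : Fin n → Fin (m + 1),
        if Antitone (fun i => ((l i : ℕ))) then
          schur (fun i => (l i : ℕ)) x *
            schur (fun k : Fin m =>
              n - (Finset.univ.filter fun i : Fin n =>
                    ((Fin.rev k : ℕ) + 1 ≤ (l i : ℕ))).card) y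
        else 0 :=
  stmt16_general x y hx hy
end

section
/- Let M be a Haynsworth matrix as above (diagonal blocks p_t·I + q_t·(J−I) of sizes n_t, off-diagonal blocks b_{s,t}·J), and suppose p_t ≤ q_t whenever n_t ≥ 2. Then M has at most one positive eigenvalue if and only if the ℓ×ℓ matrix M̃ with entries M̃_{tt} = n_t²q_t + n_t(p_t − q_t) and M̃_{st} = n_s n_t b_{s,t} (s ≠ t) has at most one positive eigenvalue. -/
/-!
A real symmetric matrix has at most `k` positive eigenvalues iff its quadratic form is
nonpositive on a subspace of codimension at most `k` (diagonalise, then count dimensions).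
This property passes from `A` to `Pᵀ A P` for every `P`, by pulling the subspace back along `P`.

Let `P` be the `0-1` matrix whose columns are the block indicators, so that `M̃ = Pᵀ M P` and
`M = diag(p - q) + P B Pᵀ`, where `B` has diagonal `q` and off-diagonal entries `b`.
The vectors with zero block sums form `ker Pᵀ`, an `M`-invariant complement of `range P` on which
`M` acts as the diagonal `p_t - q_t`. This is `≤ 0` on blocks of size at least `2`, and blocks of
size `1` carry no such vector. So if the form of `M̃` is nonpositive on `W`, the form of `M` is
nonpositive on `P W ⊕ ker Pᵀ`, whose codimension is at most that of `W`.
-/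

open Matrix Module Finset

namespace Submodule

variable {K V V' : Type*} [Field K] [AddCommGroup V] [Module K V] [AddCommGroup V'] [Module K V']
  [FiniteDimensional K V]

theorem finrank_add_finrank_le_finrank_comap_add [FiniteDimensional K V'] (f : V →ₗ[K] V')
    (W : Submodule K V') : finrank K V + finrank K W ≤ finrank K (W.comap f) + finrank K V' := by
  have hker : LinearMap.ker (W.mkQ ∘ₗ f) = W.comap f := by
    ext x
    simp [Submodule.Quotient.mk_eq_zero]
  have hrank := LinearMap.finrank_range_add_finrank_ker (W.mkQ ∘ₗ f)
  have hrange := Submodule.finrank_le (LinearMap.range (W.mkQ ∘ₗ f))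
  have hquot := W.finrank_quotient_add_finrank
  rw [hker] at hrank
  omega

theorem finrank_le_finrank_map_add_finrank_ker (f : V →ₗ[K] V') (W : Submodule K V) :
    finrank K W ≤ finrank K (W.map f) + finrank K (LinearMap.ker f) := by
  have hrank := LinearMap.finrank_range_add_finrank_ker (f.domRestrict W)
  have hker : finrank K (LinearMap.ker (f.domRestrict W)) ≤ finrank K (LinearMap.ker f) := by
    rw [LinearMap.ker_domRestrict, ← Submodule.finrank_map_subtype_eq,
      Submodule.map_comap_subtype]
    exact Submodule.finrank_mono inf_le_right
  rw [LinearMap.range_domRestrict] at hrank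
  omega

end Submodule

theorem finrank_ker_funLeft_add_card {K ι : Type*} [Field K] [Fintype ι] (s : Finset ι) :
    finrank K (LinearMap.ker (LinearMap.funLeft K K ((↑) : s → ι))) + #s = Fintype.card ι := by
  have hrank := LinearMap.finrank_range_add_finrank_ker (LinearMap.funLeft K K ((↑) : s → ι))
  rw [LinearMap.range_eq_top.mpr
    (LinearMap.funLeft_surjective_of_injective _ _ _ Subtype.val_injective), finrank_top] at hrank
  simp only [finrank_fintype_fun_eq_card, Fintype.card_coe] at hrank
  omega

namespace Matrix

def NegSemidefOnCodim {n R : Type*} [Fintype n] [Semiring R] [PartialOrder R]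
    (A : Matrix n n R) (k : ℕ) : Prop :=
  ∃ W : Submodule R (n → R), Fintype.card n ≤ finrank R W + k ∧ ∀ x ∈ W, x ⬝ᵥ A *ᵥ x ≤ 0

variable {m n R : Type*} [Fintype m] [Fintype n]

theorem dotProduct_transpose_mul_mul_mulVec [CommSemiring R] (P : Matrix n m R) (A : Matrix n n R)
    (x y : m → R) : x ⬝ᵥ (Pᵀ * A * P) *ᵥ y = (P *ᵥ x) ⬝ᵥ A *ᵥ (P *ᵥ y) := by
  rw [← mulVec_mulVec, ← mulVec_mulVec, dotProduct_mulVec, vecMul_transpose]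

variable [Field R] [LinearOrder R]

theorem NegSemidefOnCodim.transpose_mul_mul {A : Matrix n n R} {k : ℕ}
    (hA : A.NegSemidefOnCodim k) (P : Matrix n m R) : (Pᵀ * A * P).NegSemidefOnCodim k := by
  obtain ⟨W, hdim, hW⟩ := hA
  refine ⟨W.comap P.mulVecLin, ?_, fun y hy => ?_⟩
  · have := Submodule.finrank_add_finrank_le_finrank_comap_add P.mulVecLin W
    simp only [finrank_fintype_fun_eq_card] at this
    omega
  · rw [dotProduct_transpose_mul_mul_mulVec]
    exact hW _ hy

variable [IsStrictOrderedRing R]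

theorem card_filter_pos_le_iff_negSemidefOnCodim_diagonal [DecidableEq n] (d : n → R) (k : ℕ) :
    #{i | 0 < d i} ≤ k ↔ (diagonal d).NegSemidefOnCodim k := by
  have hform (x : n → R) : x ⬝ᵥ diagonal d *ᵥ x = ∑ i, d i * x i ^ 2 := by
    simp only [dotProduct, mulVec_diagonal]
    exact sum_congr rfl fun i _ => by ring
  set S : Finset n := {i | 0 < d i}
  constructor
  · intro hS
    refine ⟨LinearMap.ker (LinearMap.funLeft R R ((↑) : S → n)),
      by have := finrank_ker_funLeft_add_card (K := R) S; omega, fun x hx => ?_⟩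
    have hxS (i : n) (hi : i ∈ S) : x i = 0 := congrFun (LinearMap.mem_ker.mp hx) ⟨i, hi⟩
    rw [hform]
    refine sum_nonpos fun i _ => ?_
    by_cases hi : i ∈ S
    · simp [hxS i hi]
    · exact mul_nonpos_of_nonpos_of_nonneg (by simpa [S] using hi) (sq_nonneg _)
  · rintro ⟨W, hdim, hW⟩
    by_contra! hS
    set V := LinearMap.ker (LinearMap.funLeft R R ((↑) : (Sᶜ : Finset n) → n))
    have hV : finrank R V + #Sᶜ = Fintype.card n := finrank_ker_funLeft_add_card Sᶜ
    rw [card_compl] at hV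
    have hVW : ¬ Disjoint V W := fun h => by
      have := Submodule.finrank_add_finrank_le_of_disjoint h
      simp only [finrank_fintype_fun_eq_card] at this
      have := S.card_le_univ
      omega
    obtain ⟨x, hxV, hxW, hx0⟩ : ∃ x ∈ V, x ∈ W ∧ x ≠ 0 := by
      simpa [Submodule.disjoint_def] using hVW
    have hxS (i : n) (hi : i ∉ S) : x i = 0 :=
      congrFun (LinearMap.mem_ker.mp hxV) ⟨i, mem_compl.mpr hi⟩
    obtain ⟨j, hj⟩ := Function.ne_iff.mp hx0
    have hjS : j ∈ S := by
      by_contra h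
      exact hj (hxS j h)
    have hpos : 0 < x ⬝ᵥ diagonal d *ᵥ x := by
      rw [hform]
      refine sum_pos' (fun i _ => ?_) ⟨j, mem_univ j, ?_⟩
      · by_cases hi : i ∈ S
        · exact mul_nonneg (mem_filter.mp hi).2.le (sq_nonneg _)
        · simp [hxS i hi]
      · exact mul_pos (mem_filter.mp hjS).2 (pow_two_pos_of_ne_zero hj)
    exact (hW x hxW).not_gt hpos

theorem disjoint_range_mulVecLin_ker_transpose (P : Matrix n m R) :
    Disjoint (LinearMap.range P.mulVecLin) (LinearMap.ker Pᵀ.mulVecLin) := by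
  rw [Submodule.disjoint_def]
  rintro _ ⟨y, rfl⟩ hy
  have : y ∈ LinearMap.ker (Pᵀ * P).mulVecLin := by
    simpa only [LinearMap.mem_ker, mulVecLin_apply, ← mulVec_mulVec] using hy
  rw [ker_mulVecLin_transpose_mul_self] at this
  exact this

theorem card_add_finrank_le_finrank_map_sup_ker_transpose (P : Matrix n m R)
    (W : Submodule R (m → R)) :
    Fintype.card n + finrank R W ≤
      finrank R (W.map P.mulVecLin ⊔ LinearMap.ker Pᵀ.mulVecLin : Submodule R (n → R)) +
        Fintype.card m := by
  have hdisj : Disjoint (W.map P.mulVecLin) (LinearMap.ker Pᵀ.mulVecLin) :=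
    (disjoint_range_mulVecLin_ker_transpose P).mono_left LinearMap.map_le_range
  have hsup := Submodule.finrank_sup_add_finrank_inf_eq (W.map P.mulVecLin)
    (LinearMap.ker Pᵀ.mulVecLin)
  rw [hdisj.eq_bot, finrank_bot] at hsup
  have hmap := Submodule.finrank_le_finrank_map_add_finrank_ker P.mulVecLin W
  have hP := LinearMap.finrank_range_add_finrank_ker P.mulVecLin
  have hPt := LinearMap.finrank_range_add_finrank_ker Pᵀ.mulVecLin
  have hrank : finrank R (LinearMap.range Pᵀ.mulVecLin) =
      finrank R (LinearMap.range P.mulVecLin) := rank_transpose P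
  simp only [finrank_fintype_fun_eq_card] at hP hPt
  omega

theorem negSemidefOnCodim_iff_transpose_mul_mul {M : Matrix n n R} (hM : M.IsSymm)
    {P : Matrix n m R} (hker : ∀ z, Pᵀ *ᵥ z = 0 → Pᵀ *ᵥ (M *ᵥ z) = 0 ∧ z ⬝ᵥ M *ᵥ z ≤ 0)
    (k : ℕ) : M.NegSemidefOnCodim k ↔ (Pᵀ * M * P).NegSemidefOnCodim k := by
  refine ⟨fun h => h.transpose_mul_mul P, ?_⟩
  rintro ⟨W, hdim, hW⟩
  refine ⟨W.map P.mulVecLin ⊔ LinearMap.ker Pᵀ.mulVecLin,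
    by have := card_add_finrank_le_finrank_map_sup_ker_transpose P W; omega, fun x hx => ?_⟩
  obtain ⟨_, ⟨y, hy, rfl⟩, z, hz, rfl⟩ := Submodule.mem_sup.mp hx
  obtain ⟨hMz, hzMz⟩ := hker z hz
  have hcross : (P *ᵥ y) ⬝ᵥ M *ᵥ z = 0 := by
    rw [← vecMul_transpose, ← dotProduct_mulVec, hMz, dotProduct_zero]
  have hcross' : z ⬝ᵥ M *ᵥ (P *ᵥ y) = 0 := by
    rw [dotProduct_mulVec, ← mulVec_transpose, hM.eq, dotProduct_comm, hcross]
  have hyMy := hW y hy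
  rw [dotProduct_transpose_mul_mul_mulVec] at hyMy
  simp only [mulVecLin_apply, mulVec_add, dotProduct_add, add_dotProduct]
  linarith

end Matrix

theorem Matrix.IsHermitian.card_filter_eigenvalues_pos_le_iff {n : Type*} [Fintype n]
    [DecidableEq n] {A : Matrix n n ℝ} (hA : A.IsHermitian) (k : ℕ) :
    #{i | 0 < hA.eigenvalues i} ≤ k ↔ A.NegSemidefOnCodim k := by
  set U : Matrix n n ℝ := ↑hA.eigenvectorUnitary
  have hD : Uᵀ * A * U = diagonal hA.eigenvalues := by
    simpa [U, star_eq_conjTranspose] using hA.conjStarAlgAut_star_eigenvectorUnitary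
  have hA' : A = Uᵀᵀ * diagonal hA.eigenvalues * Uᵀ := by
    simpa [U, star_eq_conjTranspose] using hA.spectral_theorem
  rw [card_filter_pos_le_iff_negSemidefOnCodim_diagonal]
  exact ⟨fun h => hA' ▸ h.transpose_mul_mul Uᵀ, fun h => hD ▸ h.transpose_mul_mul U⟩

section Haynsworth

variable {ι κ : Type*} (R : Type*) (β : ι → κ)

def blockIndicator [DecidableEq κ] [Zero R] [One R] : Matrix ι κ R :=
  Matrix.of fun i t => if β i = t then 1 else 0

/-- The Haynsworth matrix with diagonal blocks `p_t I + q_t (J - I)` and off-diagonal blocks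
`b_{st} J` is `haynsworthMatrix R β (p - q) B`, where `B` has diagonal `q` and off-diagonal `b`. -/
def haynsworthMatrix [DecidableEq ι] [AddZeroClass R] (c : κ → R) (B : Matrix κ κ R) :
    Matrix ι ι R :=
  diagonal (c ∘ β) + B.submatrix β β

variable {R} [CommRing R]

theorem isSymm_haynsworthMatrix [DecidableEq ι] (c : κ → R) {B : Matrix κ κ R} (hB : B.IsSymm) :
    (haynsworthMatrix R β c B).IsSymm :=
  (isSymm_diagonal _).add (hB.submatrix β)

variable [DecidableEq κ]

theorem blockIndicator_transpose_mulVec_apply [Fintype ι] (z : ι → R) (t : κ) :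
    ((blockIndicator R β)ᵀ *ᵥ z) t = ∑ i with β i = t, z i := by
  simp [blockIndicator, mulVec, dotProduct, sum_filter]

theorem blockIndicator_mul_mul_transpose [Fintype κ] (B : Matrix κ κ R) :
    blockIndicator R β * B * (blockIndicator R β)ᵀ = B.submatrix β β := by
  ext i j
  simp [blockIndicator, mul_apply]

theorem blockIndicator_transpose_mul_self [Fintype ι] :
    (blockIndicator R β)ᵀ * blockIndicator R β = diagonal fun t => (#{i | β i = t} : R) := by
  ext s t
  by_cases h : s = t
  · simp [blockIndicator, mul_apply, h, ← ite_and, sum_boole]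
  · simp only [blockIndicator, transpose_apply, of_apply, mul_apply, diagonal_apply_ne _ h]
    exact sum_eq_zero fun i _ => by grind

theorem blockIndicator_transpose_mul_diagonal [DecidableEq ι] [Fintype ι] [Fintype κ]
    (c : κ → R) :
    (blockIndicator R β)ᵀ * diagonal (c ∘ β) = diagonal c * (blockIndicator R β)ᵀ := by
  ext t i
  by_cases h : β i = t <;> simp [blockIndicator, h]

theorem eq_zero_of_blockIndicator_transpose_mulVec_eq_zero [Fintype ι] {z : ι → R}
    (hz : (blockIndicator R β)ᵀ *ᵥ z = 0) {i : ι} (hi : #{j | β j = β i} ≤ 1) : z i = 0 := by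
  have hblock : ({j | β j = β i} : Finset ι) = {i} :=
    eq_singleton_iff_unique_mem.mpr ⟨by simp, fun j hj => card_le_one.mp hi j hj i (by simp)⟩
  simpa [blockIndicator_transpose_mulVec_apply, hblock] using congrFun hz (β i)

variable [DecidableEq ι] [Fintype κ] (c : κ → R) (B : Matrix κ κ R)

theorem haynsworthMatrix_eq_diagonal_add :
    haynsworthMatrix R β c B =
      diagonal (c ∘ β) + blockIndicator R β * B * (blockIndicator R β)ᵀ := by
  rw [haynsworthMatrix, blockIndicator_mul_mul_transpose]

variable [Fintype ι]

theorem blockIndicator_transpose_mul_haynsworthMatrix_mul :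
    (blockIndicator R β)ᵀ * haynsworthMatrix R β c B * blockIndicator R β =
      diagonal c * diagonal (fun t => (#{i | β i = t} : R)) +
        diagonal (fun t => (#{i | β i = t} : R)) * B *
          diagonal (fun t => (#{i | β i = t} : R)) := by
  rw [haynsworthMatrix_eq_diagonal_add, Matrix.mul_add, Matrix.add_mul,
    blockIndicator_transpose_mul_diagonal, ← blockIndicator_transpose_mul_self]
  simp only [Matrix.mul_assoc]

variable {β} {z : ι → R} (hz : (blockIndicator R β)ᵀ *ᵥ z = 0)
include hz

theorem haynsworthMatrix_mulVec_of_blockIndicator_transpose_mulVec_eq_zero :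
    haynsworthMatrix R β c B *ᵥ z = diagonal (c ∘ β) *ᵥ z := by
  rw [haynsworthMatrix_eq_diagonal_add, add_mulVec, ← mulVec_mulVec, hz, mulVec_zero, add_zero]

theorem blockIndicator_transpose_mulVec_haynsworthMatrix_mulVec :
    (blockIndicator R β)ᵀ *ᵥ (haynsworthMatrix R β c B *ᵥ z) = 0 := by
  rw [haynsworthMatrix_mulVec_of_blockIndicator_transpose_mulVec_eq_zero c B hz,
    mulVec_mulVec, blockIndicator_transpose_mul_diagonal, ← mulVec_mulVec, hz, mulVec_zero]

theorem dotProduct_haynsworthMatrix_mulVec_nonpos [LinearOrder R] [IsStrictOrderedRing R]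
    (hc : ∀ t, 2 ≤ #{i | β i = t} → c t ≤ 0) : z ⬝ᵥ haynsworthMatrix R β c B *ᵥ z ≤ 0 := by
  rw [haynsworthMatrix_mulVec_of_blockIndicator_transpose_mulVec_eq_zero c B hz]
  simp only [dotProduct, mulVec_diagonal, Function.comp_apply]
  refine sum_nonpos fun i _ => ?_
  by_cases hi : #{j | β j = β i} ≤ 1
  · simp [eq_zero_of_blockIndicator_transpose_mulVec_eq_zero β hz hi]
  · have := hc (β i) (by omega)
    nlinarith [mul_self_nonneg (z i)]

end Haynsworth

theorem haynsworthMatrix_negSemidefOnCodim_iff {ι κ R : Type*} [Fintype ι] [DecidableEq ι]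
    [Fintype κ] [DecidableEq κ] [Field R] [LinearOrder R] [IsStrictOrderedRing R] (β : ι → κ)
    (c : κ → R) {B : Matrix κ κ R} (hB : B.IsSymm) (hc : ∀ t, 2 ≤ #{i | β i = t} → c t ≤ 0)
    (k : ℕ) : (haynsworthMatrix R β c B).NegSemidefOnCodim k ↔
      ((blockIndicator R β)ᵀ * haynsworthMatrix R β c B * blockIndicator R β).NegSemidefOnCodim k :=
  negSemidefOnCodim_iff_transpose_mul_mul (isSymm_haynsworthMatrix β c hB) (fun _ hz =>
    ⟨blockIndicator_transpose_mulVec_haynsworthMatrix_mulVec c B hz,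
      dotProduct_haynsworthMatrix_mulVec_nonpos c B hz hc⟩) k

/-- Let `M` be a Haynsworth matrix (block assignment `β : Fin N → Fin ℓ`,
diagonal blocks `p_t·I + q_t·(J-I)`, off-diagonal blocks `b_{s,t}·J`), and suppose `p_t ≤ q_t`
whenever the block size `n_t ≥ 2`.  Then `M` has at most one positive eigenvalue iff the
`ℓ×ℓ` compression `M̃` with `M̃_{tt} = n_t²q_t + n_t(p_t - q_t)` and `M̃_{st} = n_s n_t b_{s,t}`
has at most one positive eigenvalue. -/
theorem stmt18 {N l : ℕ} (β : Fin N → Fin l) (p q : Fin l → ℝ) (b : Fin l → Fin l → ℝ)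
    (hb : ∀ s t, b s t = b t s)
    (nsize : Fin l → ℕ)
    (hnsize : ∀ t, nsize t = (Finset.univ.filter fun i : Fin N => β i = t).card)
    (hpq : ∀ t, 2 ≤ nsize t → p t ≤ q t)
    (M : Matrix (Fin N) (Fin N) ℝ)
    (hM : ∀ i j : Fin N, M i j =
      if β i = β j then (if i = j then p (β i) else q (β i)) else b (β i) (β j))
    (hherm : M.IsHermitian)
    (Mt : Matrix (Fin l) (Fin l) ℝ)
    (hMt : ∀ s t : Fin l, Mt s t =
      if s = t then (nsize t : ℝ) ^ 2 * q t + (nsize t : ℝ) * (p t - q t)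
      else (nsize s : ℝ) * (nsize t : ℝ) * b s t)
    (hMtherm : Mt.IsHermitian) :
    (Finset.univ.filter fun i => 0 < hherm.eigenvalues i).card ≤ 1 ↔
      (Finset.univ.filter fun i => 0 < hMtherm.eigenvalues i).card ≤ 1 := by
  set B : Matrix (Fin l) (Fin l) ℝ := Matrix.of fun s t => if s = t then q t else b s t
  have hB : B.IsSymm := IsSymm.ext fun s t => by
    by_cases h : s = t
    · simp [B, h]
    · simp [B, h, Ne.symm h, hb]
  have hMH : M = haynsworthMatrix ℝ β (p - q) B := by
    ext i j
    rw [hM]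
    by_cases hij : i = j
    · simp [haynsworthMatrix, B, hij]
    · by_cases hβ : β i = β j <;> simp [haynsworthMatrix, B, hij, hβ]
  have hMtM : Mt = (blockIndicator ℝ β)ᵀ * M * blockIndicator ℝ β := by
    rw [hMH, blockIndicator_transpose_mul_haynsworthMatrix_mul]
    ext s t
    simp only [hMt, ← hnsize, Matrix.add_apply, diagonal_mul_diagonal, diagonal_mul, mul_diagonal,
      diagonal_apply, of_apply, B, Pi.sub_apply]
    split_ifs with hst
    · subst hst
      ring
    · ring
  have hc (t : Fin l) (ht : 2 ≤ #{i | β i = t}) : (p - q) t ≤ 0 :=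
    sub_nonpos.mpr (hpq t (hnsize t ▸ ht))
  rw [hherm.card_filter_eigenvalues_pos_le_iff, hMtherm.card_filter_eigenvalues_pos_le_iff, hMtM,
    hMH]
  exact haynsworthMatrix_negSemidefOnCodim_iff β (p - q) hB hc 1
end
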